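/- Let g(x) = arccos(x) - x·√(1-x²). Then ∫₀¹ ∫₀^{√(1-x₁²)} (3π/4 + x₁x₂ - (g(x₁)+g(x₂))/2)² dx₂ dx₁ = π³/16 + 19π/192 + 2/9. -/

import Mathlib

/-!
Write `g = segmentArea`. Since `g' = -2√(1 - x²)`, integration by parts gives primitives of `g`,
`t g`, `g²` and `t ^ (2k) √(1 - t²)` that are polynomials in `t`, `g t` and `√(1 - t²)`. Along
the slice `x₁ = x` the inner integral stops at `√(1 - x²)`. Complementary arcs give
`arccos √(1 - x²) = π / 2 - arccos x`, so `g √(1 - x²)` can be written using `g x`, and the inner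
integral is an explicit function of `x` of the same kind. An explicit primitive of that function
then gives the outer integral.
-/

open Real Set

section

variable {x : ℝ}

/-- The area of the part `{u ≥ x}` of the unit disk cut off by the chord at abscissa `x`. -/
noncomputable def segmentArea (x : ℝ) : ℝ := arccos x - x * √(1 - x ^ 2)

@[fun_prop]
lemma continuous_segmentArea : Continuous segmentArea := by
  unfold segmentArea
  fun_prop

lemma segmentArea_zero : segmentArea 0 = π / 2 := by simp [segmentArea]

lemma segmentArea_one : segmentArea 1 = 0 := by simp [segmentArea]

lemma sq_sqrt_one_sub_sq (hx : x ∈ Icc (-1) 1) : √(1 - x ^ 2) ^ 2 = 1 - x ^ 2 :=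
  sq_sqrt (by nlinarith [hx.1, hx.2])

lemma sqrt_one_sub_sq_pos (hx : x ∈ Ioo (-1) 1) : 0 < √(1 - x ^ 2) :=
  sqrt_pos.2 (by nlinarith [hx.1, hx.2])

lemma sqrt_one_sub_sq_sqrt_one_sub_sq (hx : x ∈ Icc 0 1) : √(1 - √(1 - x ^ 2) ^ 2) = x := by
  rw [sq_sqrt_one_sub_sq ⟨by linarith [hx.1], hx.2⟩, sub_sub_cancel, sqrt_sq hx.1]

lemma segmentArea_sqrt_one_sub_sq (hx : x ∈ Icc 0 1) :
    segmentArea √(1 - x ^ 2) = π / 2 - segmentArea x - 2 * x * √(1 - x ^ 2) := by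
  rw [segmentArea, segmentArea, sqrt_one_sub_sq_sqrt_one_sub_sq hx, ← arcsin_eq_arccos hx.1,
    arcsin_eq_pi_div_two_sub_arccos]
  ring

lemma hasDerivAt_sqrt_one_sub_sq (hx : x ∈ Ioo (-1) 1) :
    HasDerivAt (fun t => √(1 - t ^ 2)) (-x / √(1 - x ^ 2)) x := by
  refine (((hasDerivAt_pow 2 x).const_sub 1).sqrt
    (sqrt_pos.1 (sqrt_one_sub_sq_pos hx)).ne').congr_deriv ?_
  field_simp
  ring

lemma hasDerivAt_sqrt_one_sub_sq_pow_three (hx : x ∈ Ioo (-1) 1) :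
    HasDerivAt (fun t => √(1 - t ^ 2) ^ 3) (-3 * x * √(1 - x ^ 2)) x := by
  refine ((hasDerivAt_sqrt_one_sub_sq hx).fun_pow 3).congr_deriv ?_
  field_simp [(sqrt_one_sub_sq_pos hx).ne']
  ring

lemma hasDerivAt_segmentArea (hx : x ∈ Ioo (-1) 1) :
    HasDerivAt segmentArea (-2 * √(1 - x ^ 2)) x := by
  refine ((hasDerivAt_arccos hx.1.ne' hx.2.ne).sub
    ((hasDerivAt_id' x).fun_mul (hasDerivAt_sqrt_one_sub_sq hx))).congr_deriv ?_
  field_simp [(sqrt_one_sub_sq_pos hx).ne']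
  linear_combination sq_sqrt_one_sub_sq (Ioo_subset_Icc_self hx)

lemma hasDerivAt_primitive_segmentArea (hx : x ∈ Ioo (-1) 1) :
    HasDerivAt (fun t => t * segmentArea t - 2 / 3 * √(1 - t ^ 2) ^ 3) (segmentArea x) x := by
  refine (((hasDerivAt_id' x).fun_mul (hasDerivAt_segmentArea hx)).sub
    ((hasDerivAt_sqrt_one_sub_sq_pow_three hx).const_mul (2 / 3))).congr_deriv ?_
  ring

lemma hasDerivAt_primitive_id_mul_segmentArea (hx : x ∈ Ioo (-1) 1) :
    HasDerivAt (fun t => (t ^ 2 / 2 - 1 / 8) * segmentArea t - t * √(1 - t ^ 2) ^ 3 / 4)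
      (x * segmentArea x) x := by
  refine (((((hasDerivAt_pow 2 x).div_const 2).sub_const (1 / 8)).fun_mul
    (hasDerivAt_segmentArea hx)).sub (((hasDerivAt_id' x).fun_mul
      (hasDerivAt_sqrt_one_sub_sq_pow_three hx)).div_const 4)).congr_deriv ?_
  norm_num
  linear_combination (-√(1 - x ^ 2) / 4) * sq_sqrt_one_sub_sq (Ioo_subset_Icc_self hx)

lemma hasDerivAt_primitive_segmentArea_sq (hx : x ∈ Ioo (-1) 1) :
    HasDerivAt (fun t => t * segmentArea t ^ 2 - 4 / 3 * (√(1 - t ^ 2) ^ 3 * segmentArea t)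
        - 8 / 3 * (t - 2 / 3 * t ^ 3 + 1 / 5 * t ^ 5))
      (segmentArea x ^ 2) x := by
  have hg := hasDerivAt_segmentArea hx
  refine ((((hasDerivAt_id' x).fun_mul (hg.fun_pow 2)).sub
    (((hasDerivAt_sqrt_one_sub_sq_pow_three hx).fun_mul hg).const_mul (4 / 3))).sub
    ((((hasDerivAt_id' x).sub ((hasDerivAt_pow 3 x).const_mul (2 / 3))).add
      ((hasDerivAt_pow 5 x).const_mul (1 / 5))).const_mul (8 / 3))).congr_deriv ?_
  norm_num
  linear_combination (8 / 3 * (√(1 - x ^ 2) ^ 2 + (1 - x ^ 2))) *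
    sq_sqrt_one_sub_sq (Ioo_subset_Icc_self hx)

lemma hasDerivAt_primitive_sq_mul_sqrt_one_sub_sq (hx : x ∈ Ioo (-1) 1) :
    HasDerivAt (fun t => -(t * √(1 - t ^ 2) ^ 3) / 4 - segmentArea t / 8)
      (x ^ 2 * √(1 - x ^ 2)) x := by
  refine ((((hasDerivAt_id' x).fun_mul (hasDerivAt_sqrt_one_sub_sq_pow_three hx)).neg.div_const
    4).sub ((hasDerivAt_segmentArea hx).div_const 8)).congr_deriv ?_
  linear_combination (-√(1 - x ^ 2) / 4) * sq_sqrt_one_sub_sq (Ioo_subset_Icc_self hx)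

lemma hasDerivAt_primitive_pow_four_mul_sqrt_one_sub_sq (hx : x ∈ Ioo (-1) 1) :
    HasDerivAt (fun t => -(t ^ 3 * √(1 - t ^ 2) ^ 3) / 6 - t * √(1 - t ^ 2) ^ 3 / 8
        - segmentArea t / 16)
      (x ^ 4 * √(1 - x ^ 2)) x := by
  have hc := hasDerivAt_sqrt_one_sub_sq_pow_three hx
  refine (((((hasDerivAt_pow 3 x).fun_mul hc).neg.div_const 6).sub
    (((hasDerivAt_id' x).fun_mul hc).div_const 8)).sub
    ((hasDerivAt_segmentArea hx).div_const 16)).congr_deriv ?_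
  norm_num
  linear_combination (-√(1 - x ^ 2) * (1 / 8 + x ^ 2 / 2)) *
    sq_sqrt_one_sub_sq (Ioo_subset_Icc_self hx)

noncomputable def innerPrimitive (K X t : ℝ) : ℝ :=
  K ^ 2 * t + K * X * t ^ 2 + X ^ 2 / 3 * t ^ 3
    - K * (t * segmentArea t - 2 / 3 * √(1 - t ^ 2) ^ 3)
    - X * ((t ^ 2 / 2 - 1 / 8) * segmentArea t - t * √(1 - t ^ 2) ^ 3 / 4)
    + (t * segmentArea t ^ 2 - 4 / 3 * (√(1 - t ^ 2) ^ 3 * segmentArea t)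
        - 8 / 3 * (t - 2 / 3 * t ^ 3 + 1 / 5 * t ^ 5)) / 4

lemma hasDerivAt_innerPrimitive (K X : ℝ) (hx : x ∈ Ioo (-1) 1) :
    HasDerivAt (innerPrimitive K X) ((K + X * x - segmentArea x / 2) ^ 2) x := by
  unfold innerPrimitive
  refine (((((((hasDerivAt_id' x).const_mul (K ^ 2)).add
    ((hasDerivAt_pow 2 x).const_mul (K * X))).add ((hasDerivAt_pow 3 x).const_mul (X ^ 2 / 3))).sub
    ((hasDerivAt_primitive_segmentArea hx).const_mul K)).sub
    ((hasDerivAt_primitive_id_mul_segmentArea hx).const_mul X)).add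
    ((hasDerivAt_primitive_segmentArea_sq hx).div_const 4)).congr_deriv ?_
  norm_num
  ring

lemma integral_sq_add_mul_sub_half_segmentArea (K X : ℝ) {a b : ℝ} (hab : a ≤ b) (ha : -1 ≤ a)
    (hb : b ≤ 1) :
    ∫ t in a..b, (K + X * t - segmentArea t / 2) ^ 2
      = innerPrimitive K X b - innerPrimitive K X a :=
  intervalIntegral.integral_eq_sub_of_hasDerivAt_of_le hab
    (by unfold innerPrimitive; fun_prop)
    (fun _ ht => hasDerivAt_innerPrimitive K X ⟨by linarith [ht.1], by linarith [ht.2]⟩)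
    (Continuous.intervalIntegrable (by fun_prop) _ _)

noncomputable def sliceIntegral (x : ℝ) : ℝ :=
  π * (-1 / 3 + 3 / 2 * x - 7 / 6 * x ^ 3)
    + (π ^ 2 / 4 - 16 / 45 + 343 / 180 * x ^ 2 - 31 / 20 * x ^ 4) * √(1 - x ^ 2)
    + (1 / 3 - x / 8) * segmentArea x

lemma integral_slice_eq (hx : x ∈ Icc 0 1) :
    ∫ y in (0 : ℝ)..√(1 - x ^ 2), (3 * π / 4 + x * y - (segmentArea x + segmentArea y) / 2) ^ 2
      = sliceIntegral x := by
  calc _ = ∫ y in (0 : ℝ)..√(1 - x ^ 2),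
          ((3 * π / 4 - segmentArea x / 2) + x * y - segmentArea y / 2) ^ 2 := by
        congr 1
        funext y
        ring
    _ = _ := by
      rw [integral_sq_add_mul_sub_half_segmentArea _ _ (sqrt_nonneg _) (by norm_num)
        (sqrt_le_one.2 (by nlinarith [hx.1]))]
      simp only [innerPrimitive, sliceIntegral, segmentArea_sqrt_one_sub_sq hx,
        sqrt_one_sub_sq_sqrt_one_sub_sq hx, segmentArea_zero]
      norm_num
      linear_combination (14 / 45 * √(1 - x ^ 2) - 2 / 15 * √(1 - x ^ 2) ^ 3 + 3 / 2 * x * π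
        + 37 / 15 * x ^ 2 * √(1 - x ^ 2)) * sq_sqrt_one_sub_sq ⟨by linarith [hx.1], hx.2⟩

noncomputable def outerPrimitive (x : ℝ) : ℝ :=
  π * (-(1 / 3) * x + 3 / 4 * x ^ 2 - 7 / 24 * x ^ 4)
    + (π ^ 2 / 4 - 16 / 45) * (-segmentArea x / 2)
    + 343 / 180 * (-(x * √(1 - x ^ 2) ^ 3) / 4 - segmentArea x / 8)
    - 31 / 20 * (-(x ^ 3 * √(1 - x ^ 2) ^ 3) / 6 - x * √(1 - x ^ 2) ^ 3 / 8 - segmentArea x / 16)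
    + 1 / 3 * (x * segmentArea x - 2 / 3 * √(1 - x ^ 2) ^ 3)
    - 1 / 8 * ((x ^ 2 / 2 - 1 / 8) * segmentArea x - x * √(1 - x ^ 2) ^ 3 / 4)

lemma hasDerivAt_outerPrimitive (hx : x ∈ Ioo (-1) 1) :
    HasDerivAt outerPrimitive (sliceIntegral x) x := by
  unfold outerPrimitive
  refine ((((((((((hasDerivAt_id' x).const_mul (-(1 / 3))).add
    ((hasDerivAt_pow 2 x).const_mul (3 / 4))).sub
    ((hasDerivAt_pow 4 x).const_mul (7 / 24))).const_mul π).add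
    (((hasDerivAt_segmentArea hx).neg.div_const 2).const_mul (π ^ 2 / 4 - 16 / 45))).add
    ((hasDerivAt_primitive_sq_mul_sqrt_one_sub_sq hx).const_mul (343 / 180))).sub
    ((hasDerivAt_primitive_pow_four_mul_sqrt_one_sub_sq hx).const_mul (31 / 20))).add
    ((hasDerivAt_primitive_segmentArea hx).const_mul (1 / 3))).sub
    ((hasDerivAt_primitive_id_mul_segmentArea hx).const_mul (1 / 8))).congr_deriv ?_
  simp only [sliceIntegral]
  norm_num
  ring

end

theorem T3_value
    (g : ℝ → ℝ) (hg : ∀ x, g x = Real.arccos x - x * Real.sqrt (1 - x ^ 2)) :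
    ∫ x₁ in (0:ℝ)..1, ∫ x₂ in (0:ℝ)..(Real.sqrt (1 - x₁ ^ 2)),
        (3 * Real.pi / 4 + x₁ * x₂ - (g x₁ + g x₂) / 2) ^ 2 =
      Real.pi ^ 3 / 16 + 19 * Real.pi / 192 + 2 / 9 := by
  obtain rfl : g = segmentArea := funext hg
  rw [intervalIntegral.integral_congr fun x hx =>
      integral_slice_eq (uIcc_of_le (zero_le_one (α := ℝ)) ▸ hx),
    intervalIntegral.integral_eq_sub_of_hasDerivAt_of_le (zero_le_one (α := ℝ))
      (by unfold outerPrimitive; fun_prop)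
      (fun x hx => hasDerivAt_outerPrimitive ⟨by linarith [hx.1], hx.2⟩)
      (Continuous.intervalIntegrable (by unfold sliceIntegral; fun_prop) _ _)]
  simp only [outerPrimitive, segmentArea_zero, segmentArea_one]
  norm_num
  ring
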